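/- Let G be an ancestral graph with node set V, let X and Y be disjoint non-empty node sets, and let I, R ⊆ V be sets with I ⊆ R and R ∩ (X ∪ Y) = ∅. If there exists an m-separator Z₀ relative to (X,Y) with I ⊆ Z₀ ⊆ R, then the set Z = Ant(X ∪ Y ∪ I) ∩ R is an m-separator relative to (X,Y). -/

import Mathlib

/-!
Common definitions: mixed graphs, walks, colliders, m-separation,
ancestral graphs, DAGs, MAGs, proper causal paths, adjustment criteria,
inducing paths, and MAG marginalization.
-/

universe u

/-- The four possible kinds of edges of a mixed graph, oriented along the
direction of traversal: `u → v`, `u ← v`, `u ↔ v`, `u − v`. -/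
inductive EType where
  | right : EType
  | left : EType
  | both : EType
  | undirEdge : EType
deriving DecidableEq

namespace EType

/-- The edge has an arrowhead at its first endpoint. -/
def headFst : EType → Prop
  | .left => True
  | .both => True
  | _ => False

/-- The edge has an arrowhead at its second endpoint. -/
def headSnd : EType → Prop
  | .right => True
  | .both => True
  | _ => False

end EType

/-- A mixed graph with directed, bidirected and undirected edges. -/
structure MixedGraph (V : Type u) where
  dir : V → V → Prop
  bi : V → V → Prop
  undir : V → V → Prop
  bi_symm : ∀ u v, bi u v → bi v u
  undir_symm : ∀ u v, undir u v → undir v u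

namespace MixedGraph

variable {V : Type u}

/-- `G.IsEdge e u v` holds if the graph contains the edge `e` from `u` to `v`
(read in the direction of traversal). -/
def IsEdge (G : MixedGraph V) : EType → V → V → Prop
  | .right, u, v => G.dir u v
  | .left, u, v => G.dir v u
  | .both, u, v => G.bi u v
  | .undirEdge, u, v => G.undir u v

/-- Walks in a mixed graph, remembering the type of every traversed edge. -/
inductive Walk (G : MixedGraph V) : V → V → Type u
  | nil (v : V) : Walk G v v
  | cons (u v w : V) (e : EType) (h : G.IsEdge e u v) (p : Walk G v w) : Walk G u w

namespace Walk

variable {G : MixedGraph V}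

/-- The list of nodes visited by a walk (with multiplicity). -/
def support : {a b : V} → G.Walk a b → List V
  | _, _, .nil v => [v]
  | _, _, .cons u _ _ _ _ p => u :: p.support

/-- A path is a walk without repeated nodes. -/
def IsPath {a b : V} (p : G.Walk a b) : Prop := p.support.Nodup

/-- Auxiliary m-connectivity check: `ph` records whether the previous edge of
the walk has an arrowhead at the current start node.  At every interior node,
the node must be a collider (two arrowheads meet) iff it belongs to `Z`. -/
def connFrom (Z : Set V) : Prop → {a b : V} → G.Walk a b → Prop
  | _, _, _, .nil _ => True
  | ph, _, _, .cons u _ _ e _ p =>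
      ((ph ∧ e.headFst) ↔ u ∈ Z) ∧ p.connFrom Z e.headSnd

/-- The walk m-connects its endpoints given `Z`: all colliders and only
colliders on it are in `Z`. -/
def ConnBy (Z : Set V) : {a b : V} → G.Walk a b → Prop
  | _, _, .nil _ => True
  | _, _, .cons _ _ _ e _ p => p.connFrom Z e.headSnd

/-- A causal (directed) walk: every edge points towards the end node. -/
def IsCausal : {a b : V} → G.Walk a b → Prop
  | _, _, .nil _ => True
  | _, _, .cons _ _ _ e _ p => e = EType.right ∧ p.IsCausal

/-- A walk is proper w.r.t. `X` if only its start node may belong to `X`. -/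
def ProperFrom (X : Set V) : {a b : V} → G.Walk a b → Prop
  | _, _, .nil _ => True
  | _, _, .cons _ _ _ _ _ p => ∀ n ∈ p.support, n ∉ X

/-- Concatenation of walks. -/
def append : {a b c : V} → G.Walk a b → G.Walk b c → G.Walk a c
  | _, _, _, .nil _, q => q
  | _, _, _, .cons u v _ e h p, q => .cons u v _ e h (p.append q)

/-- The walk is nonempty and its first edge has an arrowhead at the start
node. -/
def headAtStart : {a b : V} → G.Walk a b → Prop
  | _, _, .nil _ => False
  | _, _, .cons _ _ _ e _ _ => e.headFst

/-- The walk is nonempty and its last edge has an arrowhead at the end node. -/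
def headAtEnd : {a b : V} → G.Walk a b → Prop
  | _, _, .nil _ => False
  | _, _, .cons _ _ _ e _ (.nil _) => e.headSnd
  | _, _, .cons _ _ _ _ _ p => p.headAtEnd

/-- `P` holds of every (ordered) pair of consecutive nodes of the walk. -/
def edgeProp (P : V → V → Prop) : {a b : V} → G.Walk a b → Prop
  | _, _, .nil _ => True
  | _, _, .cons u v _ _ _ p => P u v ∧ p.edgeProp P

end Walk

/-- `x` and `y` are m-connected given `Z`: there is a walk between them on
which all colliders and only colliders are in `Z`. -/
def MConn (G : MixedGraph V) (Z : Set V) (x y : V) : Prop :=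
  ∃ p : G.Walk x y, p.ConnBy Z

/-- `Z` m-separates the node sets `X` and `Y`. -/
def MSep (G : MixedGraph V) (X Y Z : Set V) : Prop :=
  ∀ x ∈ X, ∀ y ∈ Y, ¬ G.MConn Z x y

/-- `Z` is an m-separator relative to `(X, Y)`: it is disjoint from `X ∪ Y`
and m-separates `X` and `Y`. -/
def IsMSep (G : MixedGraph V) (X Y Z : Set V) : Prop :=
  Disjoint Z (X ∪ Y) ∧ G.MSep X Y Z

/-- An `M`-minimal m-separator relative to `(X, Y)`. -/
def IsMinMSep (G : MixedGraph V) (X Y M Z : Set V) : Prop :=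
  G.IsMSep X Y Z ∧ M ⊆ Z ∧ ∀ Z', Z' ⊂ Z → M ⊆ Z' → ¬ G.IsMSep X Y Z'

/-- One step of the anterior relation: a directed or undirected edge. -/
def antEdge (G : MixedGraph V) (u v : V) : Prop := G.dir u v ∨ G.undir u v

/-- `u` is an anterior of `v` (every node is its own anterior). -/
def Anterior (G : MixedGraph V) (u v : V) : Prop :=
  Relation.ReflTransGen G.antEdge u v

/-- The set of anteriors of nodes of `W`. -/
def Ant (G : MixedGraph V) (W : Set V) : Set V := {u | ∃ w ∈ W, G.Anterior u w}

/-- `v` is a descendant of `u`, i.e. there is a directed path `u → ⋯ → v`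
(every node is its own descendant/ancestor). -/
def Anc (G : MixedGraph V) (u v : V) : Prop := Relation.ReflTransGen G.dir u v

/-- The set of descendants of nodes of `W`. -/
def De (G : MixedGraph V) (W : Set V) : Set V := {v | ∃ w ∈ W, G.Anc w v}

/-- The set of ancestors of nodes of `W`. -/
def AnSet (G : MixedGraph V) (W : Set V) : Set V := {v | ∃ w ∈ W, G.Anc v w}

/-- An ancestral graph: (1) for each edge `a ← b` or `a ↔ b`, `a` is not an
anterior of `b`; (2) for each edge `a − b` there is no edge `a ← c`, `a ↔ c`,
`b ← c` or `b ↔ c`. -/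
def IsAG (G : MixedGraph V) : Prop :=
  (∀ a b, G.dir b a ∨ G.bi a b → ¬ G.Anterior a b) ∧
  (∀ a b, G.undir a b →
    ∀ c, ¬ G.dir c a ∧ ¬ G.bi a c ∧ ¬ G.dir c b ∧ ¬ G.bi b c)

/-- A DAG: only directed edges, and no directed cycles. -/
def IsDAG (G : MixedGraph V) : Prop :=
  (∀ u v, ¬ G.bi u v) ∧ (∀ u v, ¬ G.undir u v) ∧
  (∀ v, ¬ Relation.TransGen G.dir v v)

/-- Two nodes are adjacent if they are joined by some edge. -/
def Adjacent (G : MixedGraph V) (u v : V) : Prop :=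
  G.dir u v ∨ G.dir v u ∨ G.bi u v ∨ G.undir u v

/-- A maximal ancestral graph (MAG): only directed and bidirected edges, no
directed cycle, no almost-directed cycle, and every pair of non-adjacent
nodes can be m-separated by some set of the remaining nodes. -/
def IsMAG (G : MixedGraph V) : Prop :=
  (∀ u v, ¬ G.undir u v) ∧
  (∀ v, ¬ Relation.TransGen G.dir v v) ∧
  (∀ u v, G.bi u v → ¬ Relation.TransGen G.dir v u) ∧
  (∀ u v, u ≠ v → ¬ G.Adjacent u v →
    ∃ Z : Set V, u ∉ Z ∧ v ∉ Z ∧ ¬ G.MConn Z u v)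

/-- `PCP G X Y`: the set of nodes, excluding nodes of `X`, that lie on a
proper causal path from `X` to `Y`. -/
def PCP (G : MixedGraph V) (X Y : Set V) : Set V :=
  {w | w ∉ X ∧ ∃ x ∈ X, ∃ y ∈ Y, ∃ p : G.Walk x y,
    p.IsPath ∧ p.IsCausal ∧ p.ProperFrom X ∧ w ∈ p.support}

/-- `Dpcp G X Y`: the descendants of nodes on proper causal paths. -/
def Dpcp (G : MixedGraph V) (X Y : Set V) : Set V := G.De (G.PCP X Y)

/-- Remove from `G` all edges into `A` and all edges out of `B`. -/
def rmInOut (G : MixedGraph V) (A B : Set V) : MixedGraph V where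
  dir u v := G.dir u v ∧ v ∉ A ∧ u ∉ B
  bi u v := G.bi u v ∧ u ∉ A ∧ v ∉ A
  undir u v := G.undir u v ∧ u ∉ B ∧ v ∉ B
  bi_symm := fun u v h => ⟨G.bi_symm u v h.1, h.2.2, h.2.1⟩
  undir_symm := fun u v h => ⟨G.undir_symm u v h.1, h.2.2, h.2.1⟩

/-- The parametrized proper back-door graph: remove every edge `x → d` with
`x ∈ X` and `d ∈ PCP(X,Y) ∪ C`. -/
def pbdC (G : MixedGraph V) (X Y C : Set V) : MixedGraph V where
  dir u v := G.dir u v ∧ ¬(u ∈ X ∧ v ∈ G.PCP X Y ∪ C)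
  bi := G.bi
  undir := G.undir
  bi_symm := G.bi_symm
  undir_symm := G.undir_symm

/-- The proper back-door graph. -/
def pbd (G : MixedGraph V) (X Y : Set V) : MixedGraph V := G.pbdC X Y ∅

/-- The adjustment criterion (AC) in a DAG: (a) no element of `Z` is a
descendant in `G_{X̄}` of a node outside `X` lying on a proper causal path
from `X` to `Y`; (b) every proper non-causal path from `X` to `Y` is blocked
by `Z`. -/
def SatisfiesACdag (G : MixedGraph V) (X Y Z : Set V) : Prop :=
  (∀ z ∈ Z, z ∉ (G.rmInOut X ∅).De (G.PCP X Y)) ∧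
  (∀ x ∈ X, ∀ y ∈ Y, ∀ p : G.Walk x y,
    p.IsPath → p.ProperFrom X → ¬ p.IsCausal → ¬ p.ConnBy Z)

/-- The adjustment criterion (AC) in a MAG: (a) no element of `Z` is a
descendant in `M` of a node outside `X` lying on a proper causal path from
`X` to `Y`; (b) every proper non-causal path from `X` to `Y` is blocked by
`Z`. -/
def SatisfiesACmag (G : MixedGraph V) (X Y Z : Set V) : Prop :=
  (∀ z ∈ Z, z ∉ G.Dpcp X Y) ∧
  (∀ x ∈ X, ∀ y ∈ Y, ∀ p : G.Walk x y,
    p.IsPath → p.ProperFrom X → ¬ p.IsCausal → ¬ p.ConnBy Z)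

/-- The constructive back-door criterion (CBC): (a) `Z` avoids
`Dpcp(X,Y)`; (b) `Z` m-separates `X` and `Y` in the proper back-door
graph. -/
def SatisfiesCBC (G : MixedGraph V) (X Y Z : Set V) : Prop :=
  (∀ z ∈ Z, z ∉ G.Dpcp X Y) ∧ (G.pbd X Y).MSep X Y Z

/-- The parametrized constructive back-door criterion CBC(A,B,C). -/
def SatisfiesCBCP (G : MixedGraph V) (X Y Z A B C : Set V) : Prop :=
  (∀ z ∈ Z, z ∉ (G.rmInOut A B).De (G.PCP X Y)) ∧ (G.pbdC X Y C).MSep X Y Z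

namespace Walk

variable {G : MixedGraph V}

/-- Auxiliary check for inducing paths: every interior non-collider is in
`L`, and every interior collider is an ancestor of a node of `T`.  `ph`
records whether the previous edge has an arrowhead at the current node. -/
def indFrom (L T : Set V) : Prop → {a b : V} → G.Walk a b → Prop
  | _, _, _, .nil _ => True
  | ph, _, _, .cons u _ _ e _ p =>
      ((ph ∧ e.headFst) → ∃ t ∈ T, Relation.ReflTransGen G.dir u t) ∧
      (¬(ph ∧ e.headFst) → u ∈ L) ∧ p.indFrom L T e.headSnd

/-- Interior conditions for inducing paths (endpoints are exempt). -/
def indBody (L T : Set V) : {a b : V} → G.Walk a b → Prop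
  | _, _, .nil _ => True
  | _, _, .cons _ _ _ e _ p => p.indFrom L T e.headSnd

end Walk

/-- `p` is an inducing path with respect to `Z` and `L`: a path on which
every non-collider other than the endpoints is in `L` and every collider is
an ancestor of the endpoints or of `Z`. -/
def IsInducing (G : MixedGraph V) (Z L : Set V) {a b : V} (p : G.Walk a b) : Prop :=
  p.IsPath ∧ p.indBody L ({a, b} ∪ Z)

/-- Adjacency in the MAG `G[∅_L`: `u, v ∉ L` are adjacent iff they cannot be
d-separated in `G` by any set `W ⊆ V∖L` (not containing `u, v`). -/
def magAdj (G : MixedGraph V) (L : Set V) (u v : V) : Prop :=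
  u ∉ L ∧ v ∉ L ∧ u ≠ v ∧
  ∀ W : Set V, Disjoint W L → u ∉ W → v ∉ W → (G.MConn W u v ∧ G.MConn W v u)

/-- The MAG `G[∅_L` obtained from the DAG `G` by marginalizing `L`: adjacent
`u, v` are joined by `u → v` if `u` is an ancestor of `v` in `G` and `v` is
not an ancestor of `u`, and by `u ↔ v` if neither is an ancestor of the
other. -/
def mag (G : MixedGraph V) (L : Set V) : MixedGraph V where
  dir u v := G.magAdj L u v ∧ G.Anc u v ∧ ¬ G.Anc v u
  bi u v := G.magAdj L u v ∧ ¬ G.Anc u v ∧ ¬ G.Anc v u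
  undir _ _ := False
  bi_symm := fun u v h =>
    ⟨⟨h.1.2.1, h.1.1, h.1.2.2.1.symm,
      fun W hW hv hu => ⟨(h.1.2.2.2 W hW hu hv).2, (h.1.2.2.2 W hW hu hv).1⟩⟩,
      h.2.2, h.2.1⟩
  undir_symm := fun _ _ h => h.elim

/-- An inducing `Z`-trail in the MAG `G[∅_L`: a path whose interior nodes are
exactly the `Z`-nodes on it, each consecutive pair being linked in `G` by an
inducing path w.r.t. `∅, L` which has arrowheads at the interior nodes. -/
def IsInducingZTrail (G : MixedGraph V) (Z L : Set V) {a b : V}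
    (p : (G.mag L).Walk a b) : Prop :=
  p.IsPath ∧ a ∉ Z ∧ b ∉ Z ∧
  (∀ v ∈ p.support, v ≠ a → v ≠ b → v ∈ Z) ∧
  p.edgeProp (fun u v => ∃ q : G.Walk u v, G.IsInducing ∅ L q ∧
    (u ∈ Z → q.headAtStart) ∧ (v ∈ Z → q.headAtEnd))

end MixedGraph

open MixedGraph

variable {V : Type u}

/-!
Write `A = Ant(X ∪ Y ∪ I)` and `Z = A ∩ R`. In an ancestral graph every node of a walk between
`X` and `Y` that m-connects given `Z` is an anterior of `X ∪ Y ∪ Z`, i.e. lies in `A`; so its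
non-colliders, being outside `Z`, are outside `R ⊇ Z₀`. A collider `c ∉ Z₀` carries an arrowhead,
so in an ancestral graph it is an ancestor of `X ∪ Y ∪ I`. Follow a directed path from `c` until it
first meets `Z₀` or `X ∪ Y` (it must, as `I ⊆ Z₀`). If it meets `z ∈ Z₀`, replace `c` by the detour
`c → ⋯ → z ← ⋯ ← c`; if it meets `Y`, cut the walk there; if it meets `X`, the reversed path followed
by the rest of the walk already m-connects `X` and `Y` given `Z₀`. Working from the `Y` end, every
collider outside `Z₀` is removed, contradicting that `Z₀` separates.
-/

namespace MixedGraph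

variable {G : MixedGraph V}

lemma mem_ant_of_mem {S : Set V} {u : V} (h : u ∈ S) : u ∈ G.Ant S :=
  ⟨u, h, .refl⟩

lemma mem_ant_of_antEdge {S : Set V} {u v : V} (h : G.antEdge u v) (hv : v ∈ G.Ant S) :
    u ∈ G.Ant S :=
  let ⟨t, ht, hvt⟩ := hv
  ⟨t, ht, .head h hvt⟩

lemma ant_union_subset_of_subset_ant {S Z : Set V} (hZ : Z ⊆ G.Ant S) :
    G.Ant (S ∪ Z) ⊆ G.Ant S := by
  rintro u ⟨t, ht | ht, hut⟩
  · exact ⟨t, ht, hut⟩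
  · obtain ⟨s, hs, hts⟩ := hZ ht
    exact ⟨s, hs, hut.trans hts⟩

lemma antEdge_of_not_headFst {e : EType} {u v : V} (h : G.IsEdge e u v) (he : ¬ e.headFst) :
    G.antEdge u v := by
  cases e
  exacts [.inl h, absurd trivial he, absurd trivial he, .inr h]

lemma antEdge_of_not_headSnd {e : EType} {u v : V} (h : G.IsEdge e u v) (he : ¬ e.headSnd) :
    G.antEdge v u := by
  cases e
  exacts [absurd trivial he, .inl h, absurd trivial he, .inr (G.undir_symm u v h)]

lemma undir_of_not_headFst_of_not_headSnd {e : EType} {u v : V} (h : G.IsEdge e u v)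
    (hf : ¬ e.headFst) (hs : ¬ e.headSnd) : G.undir u v := by
  cases e
  exacts [absurd trivial hs, absurd trivial hf, absurd trivial hf, h]

lemma exists_arrowhead_of_headFst {e : EType} {u v : V} (h : G.IsEdge e u v) (he : e.headFst) :
    ∃ d, G.dir d u ∨ G.bi u d := by
  cases e
  exacts [he.elim, ⟨v, .inl h⟩, ⟨v, .inr h⟩, he.elim]

lemma Walk.connBy_of_connFrom {Z : Set V} {ph : Prop} {a b : V} {p : G.Walk a b}
    (h : p.connFrom Z ph) : p.ConnBy Z := by
  cases p
  exacts [trivial, h.2]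

namespace IsAG

variable (hAG : G.IsAG)
include hAG

lemma not_headFst_of_undir {e : EType} {u v w : V} (hund : G.undir u v) (h : G.IsEdge e v w) :
    ¬ e.headFst := by
  cases e
  exacts [id, fun _ => (hAG.2 u v hund w).2.2.1 h, fun _ => (hAG.2 u v hund w).2.2.2 h, id]

/-- An undirected edge at `u` excludes arrowheads at `u`, so an anterior path from a node with an
arrowhead is directed. -/
lemma anc_of_anterior {c t : V} (h : G.Anterior c t) (hc : ∃ d, G.dir d c ∨ G.bi c d) :
    G.Anc c t := by
  induction h using Relation.ReflTransGen.head_induction_on with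
  | refl => exact .refl
  | head hstep _ ih =>
    obtain ⟨d, hd⟩ := hc
    rcases hstep with hdir | hund
    · exact .head hdir (ih ⟨_, .inl hdir⟩)
    · rcases hd with hd | hd
      exacts [absurd hd (hAG.2 _ _ hund d).1, absurd hd (hAG.2 _ _ hund d).2.1]

/-- Leaving `u` along an edge without arrowhead at `u` and continuing through non-colliders, one
stays on an anterior path, which ends at a collider or at the end of the walk. -/
lemma mem_ant_of_connFrom_of_not_headAtStart {Z T : Set V} {u b : V} (p : G.Walk u b)
    (hb : b ∈ T) : ∀ ph, p.connFrom Z ph → ¬ p.headAtStart → u ∈ G.Ant (T ∪ Z) := by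
  induction p with
  | nil => exact fun _ _ _ => mem_ant_of_mem (.inl hb)
  | cons u v b e h q ih =>
    rintro ph ⟨-, hq⟩ hf
    refine mem_ant_of_antEdge (antEdge_of_not_headFst h hf) ?_
    by_cases hvZ : v ∈ Z
    · exact mem_ant_of_mem (.inr hvZ)
    refine ih hb e.headSnd hq ?_
    cases q with
    | nil => exact id
    | cons v w b e' h' q' =>
      intro hf'
      by_cases hs : e.headSnd
      · exact hvZ (hq.1.mp ⟨hs, hf'⟩)
      · exact hAG.not_headFst_of_undir (undir_of_not_headFst_of_not_headSnd h hf hs) h' hf'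

/-- The invariant `¬ ph → u ∈ Ant (T ∪ Z)` propagates along the walk: an edge entering a node
without arrowhead makes it an anterior of the previous node. -/
lemma mem_ant_of_connFrom {Z T : Set V} {u b : V} (p : G.Walk u b) (hb : b ∈ T) :
    ∀ ph, p.connFrom Z ph → (¬ ph → u ∈ G.Ant (T ∪ Z)) →
      ∀ n ∈ p.support, n ∈ G.Ant (T ∪ Z) := by
  induction p with
  | nil v =>
    intro _ _ _ n hn
    rw [List.mem_singleton.mp hn]
    exact mem_ant_of_mem (.inl hb)
  | cons u v b e h q ih =>
    intro ph hc hinv n hn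
    have hu : u ∈ G.Ant (T ∪ Z) := by
      by_cases hph : ph
      · by_cases hf : e.headFst
        · exact mem_ant_of_mem (.inr (hc.1.mp ⟨hph, hf⟩))
        · exact hAG.mem_ant_of_connFrom_of_not_headAtStart (.cons u v b e h q) hb ph hc hf
      · exact hinv hph
    rcases List.mem_cons.mp hn with rfl | hn
    · exact hu
    · exact ih hb e.headSnd hc.2 (fun hs => mem_ant_of_antEdge (antEdge_of_not_headSnd h hs) hu) n hn

lemma mem_ant_of_connBy {Z T : Set V} {a b : V} (p : G.Walk a b) (hp : p.ConnBy Z)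
    (ha : a ∈ T) (hb : b ∈ T) : ∀ n ∈ p.support, n ∈ G.Ant (T ∪ Z) := by
  have ha' : a ∈ G.Ant (T ∪ Z) := mem_ant_of_mem (.inl ha)
  cases p with
  | nil =>
    intro n hn
    rwa [List.mem_singleton.mp hn]
  | cons a v b e h q =>
    intro n hn
    rcases List.mem_cons.mp hn with rfl | hn
    · exact ha'
    · exact hAG.mem_ant_of_connFrom q hb e.headSnd hp
        (fun hs => mem_ant_of_antEdge (antEdge_of_not_headSnd h hs) ha') n hn

end IsAG

/-- A directed edge `a → b` with `a ∉ Z`: chains of these are the directed paths meeting `Z` at most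
in their last node. -/
def dirAvoiding (G : MixedGraph V) (Z : Set V) (a b : V) : Prop := G.dir a b ∧ a ∉ Z

lemma exists_dirAvoiding_path_of_anc {Z S : Set V} {u t : V} (h : G.Anc u t) (ht : t ∈ S) :
    ∃ v, Relation.ReflTransGen (G.dirAvoiding Z) u v ∧ (v ∈ Z ∨ v ∈ S) := by
  induction h using Relation.ReflTransGen.head_induction_on with
  | refl => exact ⟨t, .refl, .inr ht⟩
  | @head a m hstep _ ih =>
    by_cases ha : a ∈ Z
    · exact ⟨a, .refl, .inl ha⟩
    · obtain ⟨v, hv, hvZS⟩ := ih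
      exact ⟨v, .head ⟨hstep, ha⟩ hv, hvZS⟩

lemma exists_connFrom_prepend_dirPath {Z : Set V} {u v y : V}
    (hd : Relation.TransGen (G.dirAvoiding Z) u v) (q : G.Walk v y) (hq : q.connFrom Z True) :
    ∃ w : G.Walk u y, ∀ ph, w.connFrom Z ph := by
  induction hd using Relation.TransGen.head_induction_on with
  | single h => exact ⟨.cons _ _ _ .right h.1 q, fun _ => ⟨iff_of_false (·.2) h.2, hq⟩⟩
  | head h _ ih =>
    obtain ⟨w, hw⟩ := ih
    exact ⟨.cons _ _ _ .right h.1 w, fun _ => ⟨iff_of_false (·.2) h.2, hw True⟩⟩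

lemma exists_connFrom_prepend_revDirPath {Z : Set V} {u v y : V}
    (hd : Relation.ReflTransGen (G.dirAvoiding Z) u v) (hu : u ∉ Z) (w₀ : G.Walk u y)
    (hw₀ : w₀.connFrom Z False) : ∃ w : G.Walk v y, w.connFrom Z (v ∈ Z) := by
  induction hd with
  | refl => exact ⟨w₀, by rwa [eq_false hu]⟩
  | tail _ h ih =>
    obtain ⟨w, hw⟩ := ih
    refine ⟨.cons _ _ _ .left h.1 w, ⟨and_iff_left trivial, ?_⟩⟩
    rwa [eq_false h.2] at hw

section Reroute

variable {X Y I R Z₀ : Set V}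

lemma IsAG.exists_connFrom_reroute_collider (hAG : G.IsAG) (hZ₀ : G.IsMSep X Y Z₀)
    (hI : I ⊆ Z₀) {u y : V} (hu : u ∉ Z₀) (hhead : ∃ d, G.dir d u ∨ G.bi u d)
    (huA : u ∈ G.Ant (X ∪ Y ∪ I)) (hy : y ∈ Y) (w₀ : G.Walk u y) (hw₀ : w₀.connFrom Z₀ False) :
    ∃ y' ∈ Y, ∃ w : G.Walk u y', ∀ ph, w.connFrom Z₀ ph := by
  obtain ⟨t, ht, hut⟩ := huA
  obtain ⟨v, huv, hv⟩ :=
    exists_dirAvoiding_path_of_anc (Z := Z₀) (hAG.anc_of_anterior hut hhead) ht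
  obtain hvZ | hvX | hvY : v ∈ Z₀ ∨ v ∈ X ∨ v ∈ Y := by
    rcases hv with hv | (hv | hv) | hv
    exacts [.inl hv, .inr (.inl hv), .inr (.inr hv), .inl (hI hv)]
  · obtain ⟨wb, hwb⟩ := exists_connFrom_prepend_revDirPath huv hu w₀ hw₀
    rw [eq_true hvZ] at hwb
    have huv' := (Relation.reflTransGen_iff_eq_or_transGen.mp huv).resolve_left
      (fun h => hu (h ▸ hvZ))
    exact ⟨y, hy, exists_connFrom_prepend_dirPath huv' wb hwb⟩
  · obtain ⟨wb, hwb⟩ := exists_connFrom_prepend_revDirPath huv hu w₀ hw₀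
    exact absurd ⟨wb, Walk.connBy_of_connFrom hwb⟩ (hZ₀.2 v hvX y hy)
  · rcases Relation.reflTransGen_iff_eq_or_transGen.mp huv with rfl | huv'
    · exact ⟨v, hvY, .nil v, fun _ => trivial⟩
    · exact ⟨v, hvY, exists_connFrom_prepend_dirPath huv' (.nil v) trivial⟩

lemma IsAG.exists_connFrom_of_connFrom_ant_inter (hAG : G.IsAG) (hZ₀ : G.IsMSep X Y Z₀)
    (hI : I ⊆ Z₀) (hZ₀R : Z₀ ⊆ R) {u y : V} (w : G.Walk u y) (hy : y ∈ Y) :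
    ∀ ph, w.connFrom (G.Ant (X ∪ Y ∪ I) ∩ R) ph → (∀ n ∈ w.support, n ∈ G.Ant (X ∪ Y ∪ I)) →
      ∃ y' ∈ Y, ∃ w' : G.Walk u y', w'.connFrom Z₀ ph := by
  induction w with
  | nil v => exact fun _ _ _ => ⟨v, hy, .nil v, trivial⟩
  | cons u v y e h q ih =>
    rintro ph ⟨hcol, hq⟩ hant
    obtain ⟨y', hy', q', hq'⟩ :=
      ih hy e.headSnd hq fun n hn => hant n (List.mem_cons_of_mem _ hn)
    have huA : u ∈ G.Ant (X ∪ Y ∪ I) := hant u List.mem_cons_self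
    by_cases hu : u ∈ Z₀
    · exact ⟨y', hy', .cons u v y' e h q', iff_of_true (hcol.mpr ⟨huA, hZ₀R hu⟩) hu, hq'⟩
    by_cases hc : ph ∧ e.headFst
    · obtain ⟨y'', hy'', w, hw⟩ := hAG.exists_connFrom_reroute_collider hZ₀ hI hu
        (exists_arrowhead_of_headFst h hc.2) huA hy' (.cons u v y' e h q')
        ⟨iff_of_false (·.1) hu, hq'⟩
      exact ⟨y'', hy'', w, hw ph⟩
    · exact ⟨y', hy', .cons u v y' e h q', iff_of_false hc hu, hq'⟩

lemma IsAG.exists_connBy_of_connBy_ant_inter (hAG : G.IsAG) (hZ₀ : G.IsMSep X Y Z₀)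
    (hI : I ⊆ Z₀) (hZ₀R : Z₀ ⊆ R) {x y : V} (w : G.Walk x y) (hy : y ∈ Y)
    (hw : w.ConnBy (G.Ant (X ∪ Y ∪ I) ∩ R)) (hant : ∀ n ∈ w.support, n ∈ G.Ant (X ∪ Y ∪ I)) :
    ∃ y' ∈ Y, ∃ w' : G.Walk x y', w'.ConnBy Z₀ := by
  cases w with
  | nil => exact ⟨_, hy, .nil _, trivial⟩
  | cons x v y e h q =>
    obtain ⟨y', hy', q', hq'⟩ := hAG.exists_connFrom_of_connFrom_ant_inter hZ₀ hI hZ₀R q hy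
      e.headSnd hw fun n hn => hant n (List.mem_cons_of_mem _ hn)
    exact ⟨y', hy', .cons x v y' e h q', hq'⟩

end Reroute

end MixedGraph

theorem statement_0_general (G : MixedGraph V) (hAG : G.IsAG)
    (X Y I R : Set V) (hR : R ∩ (X ∪ Y) = ∅)
    (Z₀ : Set V) (hZ₀ : G.IsMSep X Y Z₀) (hIZ₀ : I ⊆ Z₀) (hZ₀R : Z₀ ⊆ R) :
    G.IsMSep X Y (G.Ant (X ∪ Y ∪ I) ∩ R) := by
  refine ⟨(Set.disjoint_iff_inter_eq_empty.mpr hR).mono_left Set.inter_subset_right, ?_⟩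
  rintro x hx y hy ⟨w, hw⟩
  have hant : ∀ n ∈ w.support, n ∈ G.Ant (X ∪ Y ∪ I) := fun n hn =>
    ant_union_subset_of_subset_ant Set.inter_subset_left
      (hAG.mem_ant_of_connBy w hw (.inl (.inl hx)) (.inl (.inr hy)) n hn)
  obtain ⟨y', hy', w', hw'⟩ := hAG.exists_connBy_of_connBy_ant_inter hZ₀ hIZ₀ hZ₀R w hy hw hant
  exact hZ₀.2 x hx y' hy' ⟨w', hw'⟩

theorem statement_0 (G : MixedGraph V) (hAG : G.IsAG)
    (X Y I R : Set V) (hXY : Disjoint X Y) (hX : X.Nonempty) (hY : Y.Nonempty)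
    (hIR : I ⊆ R) (hR : R ∩ (X ∪ Y) = ∅)
    (Z₀ : Set V) (hZ₀ : G.IsMSep X Y Z₀) (hIZ₀ : I ⊆ Z₀) (hZ₀R : Z₀ ⊆ R) :
    G.IsMSep X Y (G.Ant (X ∪ Y ∪ I) ∩ R) :=
  statement_0_general G hAG X Y I R hR Z₀ hZ₀ hIZ₀ hZ₀R
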